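/- arXiv:2605.01051 — 5 statements merged into one kernel-verified Lean document; each statement's English description precedes it below -/
import Mathlib

section
/- For the timed-until formula ψ̃ = q U (r ∧ r_{t≥0}) over the time-augmented system whose timer decreases by one per step, the robustness score satisfies ρ_{[ψ̃]}([x_{0:∞}, t₀]) = max_{0 ≤ t ≤ t₀} min( r(x_{t:∞}), min_{0 ≤ k < t} q(x_k) ), i.e., it equals the robustness of the finite-horizon until q U_{[0,t₀]} r. -/
variable {X A : Type*}

/-- Suffix (time shift) of an infinite trajectory. -/
def shift (x : ℕ → X) (t : ℕ) : ℕ → X := fun n => x (n + t)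

/-- The candidate term at witness time `t` in the quantitative semantics of `q U r`:
`min (r (x_{t:∞}), min_{0 ≤ k < t} q (x_k))` (empty min is `⊤`). -/
noncomputable def untilTerm (q : X → EReal) (r : (ℕ → X) → EReal) (x : ℕ → X) (t : ℕ) : EReal :=
  min (r (shift x t)) (⨅ k : Fin t, q (x k))

/-- Robustness of `q U r` on an infinite trajectory. -/
noncomputable def untilRob (q : X → EReal) (r : (ℕ → X) → EReal) (x : ℕ → X) : EReal :=
  ⨆ t : ℕ, untilTerm q r x t

/-- Robustness of the finite-horizon until `q U_{[0,n]} r`. -/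
noncomputable def finUntil (q : X → EReal) (r : (ℕ → X) → EReal) (n : ℕ) (x : ℕ → X) : EReal :=
  ⨆ t ∈ Finset.range (n + 1), untilTerm q r x t

/-!
Along the augmented trajectory the timer at witness time `t` reads `t₀ - t`, so the guard
`r_{t≥0}` is `⊤`, neutral for `min`, when `t ≤ t₀` and `⊥`, which kills the candidate term,
when `t > t₀`: the supremum over all witness times collapses to the one over `t ≤ t₀`.
-/

theorem untilTerm_fst_min_snd {Y : Type*} (q : X → EReal) (r : (ℕ → X) → EReal)
    (g : Y → EReal) (z : ℕ → X × Y) (t : ℕ) :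
    untilTerm (fun p => q p.1) (fun y => min (r (fun n => (y n).1)) (g (y 0).2)) z t
      = min (untilTerm q r (fun n => (z n).1) t) (g (z t).2) := by
  simp only [untilTerm, shift, zero_add]
  exact min_right_comm _ _ _

theorem min_ite_top_bot {α : Type*} [CompleteLinearOrder α] (a : α) (p : Prop) [Decidable p] :
    min a (if p then ⊤ else ⊥) = ⨆ _ : p, a := by
  split_ifs with hp <;> simp [hp]

/-- For the timed-until formula ψ̃ = q U (r ∧ r_{t≥0}) over the time-augmented
system (whose timer starts at t₀ and decreases by one each step), the robustness equals the
finite-horizon until robustness max_{0 ≤ t ≤ t₀} min(r(x_{t:∞}), min_{0 ≤ k < t} q(x_k)). -/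
theorem timed_until_eq_finite_horizon (q : X → EReal) (r : (ℕ → X) → EReal)
    (x : ℕ → X) (t0 : ℕ) :
    untilRob (fun p : X × ℤ => q p.1)
      (fun y : ℕ → X × ℤ =>
        min (r (fun n => (y n).1)) (if 0 ≤ (y 0).2 then (⊤ : EReal) else ⊥))
      (fun n => (x n, (t0 : ℤ) - n))
    = finUntil q r t0 x := by
  have timer_nonneg (t : ℕ) : (0 : ℤ) ≤ t0 - t ↔ t ∈ Finset.range (t0 + 1) := by
    rw [sub_nonneg, Finset.mem_range, Nat.lt_succ_iff, Nat.cast_le]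
  refine iSup_congr fun t => ?_
  rw [untilTerm_fst_min_snd q r (fun s : ℤ => if 0 ≤ s then ⊤ else ⊥), min_ite_top_bot]
  exact iSup_congr_Prop (timer_nonneg t) fun _ => rfl
end

section
/- Replacing the right operand of an until by its optimal value does not change the optimal value: for any horizon n ≥ 0, the optimal (over action sequences) finite-horizon robustness of q U_{[0,n]} r equals the optimal finite-horizon robustness of q U_{[0,n]} V*_r, where V*_r(x) = max over action sequences from x of r(x_{0:∞}). Consequently the infinite-horizon optimal values of q U r and q U V*_r coincide. -/
variable {X A : Type*}

/-- Trajectory of the deterministic system `x_{k+1} = f(x_k, a_k)` from `x0`. -/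
def traj (f : X → A → X) (x0 : X) (a : ℕ → A) : ℕ → X
  | 0 => x0
  | n + 1 => f (traj f x0 a n) (a n)

/-- Optimal value of a trajectory score from a state. -/
noncomputable def Vstate (f : X → A → X) (ψ : (ℕ → X) → EReal) (x0 : X) : EReal :=
  ⨆ a : ℕ → A, ψ (traj f x0 a)

section Aux

variable {X A : Type*}

/-- Splice: use `a`'s first `t` actions, then follow `b`. -/
def splice (a : ℕ → A) (t : ℕ) (b : ℕ → A) : ℕ → A :=
  fun k => if k < t then a k else b (k - t)

lemma traj_add (f : X → A → X) (x0 : X) (a : ℕ → A) (t : ℕ) :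
    ∀ n, traj f x0 a (n + t) = traj f (traj f x0 a t) (fun k => a (k + t)) n
  | 0 => by simp [traj]
  | n + 1 => by
      have h : n + 1 + t = (n + t) + 1 := by omega
      rw [h]
      simp [traj, traj_add f x0 a t n]

lemma shift_traj (f : X → A → X) (x0 : X) (a : ℕ → A) (t : ℕ) :
    shift (traj f x0 a) t = traj f (traj f x0 a t) (shift a t) := by
  funext n
  exact traj_add f x0 a t n

lemma traj_splice_prefix (f : X → A → X) (x0 : X) (a b : ℕ → A) (t : ℕ) :
    ∀ k, k ≤ t → traj f x0 (splice a t b) k = traj f x0 a k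
  | 0, _ => rfl
  | k + 1, h => by
      have hk : k < t := by omega
      simp [traj, traj_splice_prefix f x0 a b t k (by omega), splice, hk]

lemma shift_traj_splice (f : X → A → X) (x0 : X) (a b : ℕ → A) (t : ℕ) :
    shift (traj f x0 (splice a t b)) t = traj f (traj f x0 a t) b := by
  funext n
  show traj f x0 (splice a t b) (n + t) = _
  induction n with
  | zero => simpa [traj] using traj_splice_prefix f x0 a b t t le_rfl
  | succ n ih =>
      have h : n + 1 + t = (n + t) + 1 := by omega
      rw [h]
      simp [traj, ih, splice, show ¬ (n + t < t) by omega]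

/-- Key pointwise identity: the until-term with `Vstate` right operand is the sup over
tail action sequences of the until-term with `r`, along spliced actions. -/
lemma untilTerm_V_eq [Nonempty A] (f : X → A → X) (q : X → EReal) (r : (ℕ → X) → EReal)
    (x0 : X) (a : ℕ → A) (t : ℕ) :
    untilTerm q (fun y => Vstate f r (y 0)) (traj f x0 a) t =
      ⨆ b : ℕ → A, untilTerm q r (traj f x0 (splice a t b)) t := by
  have hinf : ∀ b : ℕ → A,
      (⨅ k : Fin t, q (traj f x0 (splice a t b) k)) = ⨅ k : Fin t, q (traj f x0 a k) := by
    intro b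
    exact iInf_congr fun k => by rw [traj_splice_prefix f x0 a b t k (le_of_lt k.isLt)]
  have h0 : (shift (traj f x0 a) t) 0 = traj f x0 a t := by simp [shift]
  have step : ∀ b : ℕ → A, untilTerm q r (traj f x0 (splice a t b)) t
      = (r (traj f (traj f x0 a t) b)) ⊓ (⨅ k : Fin t, q (traj f x0 a k)) := by
    intro b
    rw [untilTerm, hinf b, shift_traj_splice]
  have lhs : untilTerm q (fun y => Vstate f r (y 0)) (traj f x0 a) t
      = (⨆ b : ℕ → A, r (traj f (traj f x0 a t) b)) ⊓ (⨅ k : Fin t, q (traj f x0 a k)) := by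
    rw [untilTerm]
    congr 1
    show Vstate f r (shift (traj f x0 a) t 0) = _
    rw [h0, Vstate]
  rw [lhs]
  simp only [step]
  exact iSup_inf_eq _ _

lemma untilTerm_le_V (f : X → A → X) (q : X → EReal) (r : (ℕ → X) → EReal)
    (x0 : X) (a : ℕ → A) (t : ℕ) :
    untilTerm q r (traj f x0 a) t ≤ untilTerm q (fun y => Vstate f r (y 0)) (traj f x0 a) t := by
  refine min_le_min ?_ le_rfl
  calc r (shift (traj f x0 a) t)
      = r (traj f (traj f x0 a t) (shift a t)) := by rw [shift_traj]
    _ ≤ Vstate f r (traj f x0 a t) := le_iSup (fun b => r (traj f (traj f x0 a t) b)) (shift a t)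
    _ = (fun y => Vstate f r (y 0)) (shift (traj f x0 a) t) := by simp [shift]

end Aux

/-- replacing the right operand of an until by its optimal value function
does not change the optimal value, both at every finite horizon n and at infinite horizon. -/
theorem until_replace_r_with_Vr [Nonempty A] [Finite A]
    (f : X → A → X) (q : X → EReal) (r : (ℕ → X) → EReal)
    (hq : (Set.range q).Finite) (hr : (Set.range r).Finite) :
    (∀ (n : ℕ) (x0 : X),
        (⨆ a : ℕ → A, finUntil q r n (traj f x0 a)) =
          ⨆ a : ℕ → A, finUntil q (fun y => Vstate f r (y 0)) n (traj f x0 a)) ∧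
    (∀ x0 : X,
        (⨆ a : ℕ → A, untilRob q r (traj f x0 a)) =
          ⨆ a : ℕ → A, untilRob q (fun y => Vstate f r (y 0)) (traj f x0 a)) := by
  constructor
  · intro n x0
    apply le_antisymm
    · refine iSup_mono fun a => ?_
      rw [finUntil, finUntil]
      exact iSup₂_mono fun t ht => untilTerm_le_V f q r x0 a t
    · refine iSup_le fun a => ?_
      rw [finUntil]
      refine iSup₂_le fun t ht => ?_
      rw [untilTerm_V_eq f q r x0 a t]
      refine iSup_le fun b => ?_
      have h1 : untilTerm q r (traj f x0 (splice a t b)) t ≤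
          finUntil q r n (traj f x0 (splice a t b)) := by
        rw [finUntil]
        exact le_iSup₂ (f := fun (s : ℕ) (_ : s ∈ Finset.range (n + 1)) => untilTerm q r (traj f x0 (splice a t b)) s) t ht
      exact le_trans h1
        (le_iSup (fun a' : ℕ → A => finUntil q r n (traj f x0 a')) (splice a t b))
  · intro x0
    apply le_antisymm
    · exact iSup_mono fun a => iSup_mono fun t => untilTerm_le_V f q r x0 a t
    · refine iSup_le fun a => ?_
      rw [untilRob]
      refine iSup_le fun t => ?_
      rw [untilTerm_V_eq f q r x0 a t]
      refine iSup_le fun b => ?_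
      have h1 : untilTerm q r (traj f x0 (splice a t b)) t ≤
          untilRob q r (traj f x0 (splice a t b)) := by
        rw [untilRob]; exact le_iSup (fun s => untilTerm q r (traj f x0 (splice a t b)) s) t
      exact le_trans h1
        (le_iSup (fun a' : ℕ → A => untilRob q r (traj f x0 a')) (splice a t b))
end

section
/- There exists a deterministic system and an until (reachability) specification for which the optimal Q-function is identically its maximal value, so that a greedy Q-maximizing policy exists that never satisfies the specification: concretely, on X = A = {0,1} with f(x,a) = a and ψ = F 1_{x=1} (i.e., ⊤ U 1_{x=1}), the optimal value V*(x) = 1 for all x and Q*(x,a) = 1 for all (x,a), yet the constant policy π ≡ 0 yields the trajectory constantly 0 with robustness ρ_{[ψ]} = 0 < V*(x₀). -/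
variable {X A : Type*}

/-- Robustness of `F p` on an infinite trajectory: `sup_{t ≥ 0} p (x_t)`. -/
noncomputable def evRob (p : X → EReal) (x : ℕ → X) : EReal := ⨆ t : ℕ, p (x t)

/-- Optimal value of `F p` from a state. -/
noncomputable def evV (f : X → A → X) (p : X → EReal) (x0 : X) : EReal :=
  ⨆ a : ℕ → A, evRob p (traj f x0 a)

/-- Prepend an action to an action sequence. -/
def consAct (a : A) (c : ℕ → A) : ℕ → A
  | 0 => a
  | n + 1 => c n

/-- Optimal Q-value of `F p`: apply `a` first, then maximize over continuations. -/
noncomputable def evQ (f : X → A → X) (p : X → EReal) (x0 : X) (a : A) : EReal :=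
  ⨆ c : ℕ → A, evRob p (traj f x0 (consAct a c))

/-
Since `f(x, a) = a`, the state after one step is the chosen action, so playing `1` at some step
reaches the target from every state; as the score never exceeds `1`, `V*` and `Q*` are identically
`1`. Every action is therefore a `Q*`-maximizer, in particular the constant action `0`, which keeps
the system at `0` forever and scores `0`.
-/

theorem traj_const_of_isFixedPt {f : X → A → X} {x0 : X} {a : A} (h : f x0 a = x0) :
    ∀ t, traj f x0 (fun _ => a) t = x0
  | 0 => rfl
  | t + 1 => by rw [traj, traj_const_of_isFixedPt h t, h]

section Bounded

variable {p : X → EReal} {c : EReal}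

theorem evRob_const (p : X → EReal) (y : X) : evRob p (fun _ => y) = p y :=
  iSup_const

theorem evRob_le_of_forall_le (hp : ∀ y, p y ≤ c) (x : ℕ → X) : evRob p x ≤ c :=
  iSup_le fun t => hp (x t)

theorem evRob_eq_of_forall_le (hp : ∀ y, p y ≤ c) {x : ℕ → X} (t : ℕ) (ht : p (x t) = c) :
    evRob p x = c :=
  le_antisymm (evRob_le_of_forall_le hp x) (ht ▸ le_iSup (fun s => p (x s)) t)

theorem evV_eq_of_forall_le (hp : ∀ y, p y ≤ c) {f : X → A → X} {x0 : X} (a : ℕ → A) (t : ℕ)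
    (ht : p (traj f x0 a t) = c) : evV f p x0 = c :=
  le_antisymm (iSup_le fun _ => evRob_le_of_forall_le hp _)
    (evRob_eq_of_forall_le hp t ht ▸ le_iSup (fun a => evRob p (traj f x0 a)) a)

theorem evQ_eq_of_forall_le (hp : ∀ y, p y ≤ c) {f : X → A → X} {x0 : X} {a : A} (u : ℕ → A)
    (t : ℕ) (ht : p (traj f x0 (consAct a u) t) = c) : evQ f p x0 a = c :=
  le_antisymm (iSup_le fun _ => evRob_le_of_forall_le hp _)
    (evRob_eq_of_forall_le hp t ht ▸ le_iSup (fun u => evRob p (traj f x0 (consAct a u))) u)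

end Bounded

/-- counterexample. On X = A = Bool with f(x,a) = a and ψ = F 1_{x=1},
the optimal value is identically 1 and the optimal Q-function is identically 1 (so the
constant-0 policy is a greedy Q-maximizer), yet the closed-loop trajectory of the constant-0
policy has robustness 0, strictly below the optimal value. -/
theorem greedy_Q_suboptimal_counterexample :
    (∀ x : Bool, evV (fun (_ : Bool) (a : Bool) => a)
        (fun x => if x = true then (1 : EReal) else 0) x = 1) ∧
    (∀ x a : Bool, evQ (fun (_ : Bool) (a : Bool) => a)
        (fun x => if x = true then (1 : EReal) else 0) x a = 1) ∧
    evRob (fun x => if x = true then (1 : EReal) else 0)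
        (traj (fun (_ : Bool) (a : Bool) => a) false (fun _ => false)) = 0 ∧
    evRob (fun x => if x = true then (1 : EReal) else 0)
        (traj (fun (_ : Bool) (a : Bool) => a) false (fun _ => false)) <
      evV (fun (_ : Bool) (a : Bool) => a)
        (fun x => if x = true then (1 : EReal) else 0) false := by
  have hp : ∀ y : Bool, (if y = true then (1 : EReal) else 0) ≤ 1 := by
    simp only [Bool.forall_bool]
    norm_num
  have hV : ∀ x : Bool, evV (fun (_ : Bool) (a : Bool) => a)
      (fun x => if x = true then (1 : EReal) else 0) x = 1 :=
    fun _ => evV_eq_of_forall_le hp (fun _ => true) 1 rfl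
  have hQ : ∀ x a : Bool, evQ (fun (_ : Bool) (a : Bool) => a)
      (fun x => if x = true then (1 : EReal) else 0) x a = 1 :=
    fun _ _ => evQ_eq_of_forall_le hp (fun _ => true) 2 rfl
  have hzero : evRob (fun x => if x = true then (1 : EReal) else 0)
      (traj (fun (_ : Bool) (a : Bool) => a) false (fun _ => false)) = 0 := by
    rw [funext (traj_const_of_isFixedPt rfl), evRob_const]
    rfl
  refine ⟨hV, hQ, hzero, ?_⟩
  rw [hzero, hV]
  exact zero_lt_one
end

section
/- Monotonicity of until robustness before the witness: if the smallest witness time of ρ_{[q U r]} along x_{0:∞} is strictly positive, then ρ_{[q U r]}(x_{0:∞}) ≤ ρ_{[q U r]}(x_{1:∞}). -/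
variable {X A : Type*}

theorem shift_shift (x : ℕ → X) (s t : ℕ) : shift (shift x s) t = shift x (t + s) := by
  funext n
  simp only [shift, Nat.add_assoc]

theorem untilTerm_le_untilRob (q : X → EReal) (r : (ℕ → X) → EReal) (x : ℕ → X) (t : ℕ) :
    untilTerm q r x t ≤ untilRob q r x :=
  le_iSup (untilTerm q r x) t

/-- Dropping the first state turns the witness `t + 1` into the witness `t`, at the price of
forgetting the constraint `q (x 0)`. -/
theorem untilTerm_succ_le_untilTerm_shift (q : X → EReal) (r : (ℕ → X) → EReal) (x : ℕ → X)
    (t : ℕ) : untilTerm q r x (t + 1) ≤ untilTerm q r (shift x 1) t := by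
  rw [untilTerm, untilTerm, shift_shift]
  refine min_le_min le_rfl (le_iInf fun k => ?_)
  exact iInf_le_of_le k.succ le_rfl

theorem untilTerm_succ_le_untilRob_shift (q : X → EReal) (r : (ℕ → X) → EReal) (x : ℕ → X)
    (t : ℕ) : untilTerm q r x (t + 1) ≤ untilRob q r (shift x 1) :=
  (untilTerm_succ_le_untilTerm_shift q r x t).trans (untilTerm_le_untilRob q r _ t)

/-- monotonicity of until robustness before the witness: if the supremum is
attained and every witness time is strictly positive (i.e. the smallest witness time is
strictly positive), then ρ_{[q U r]}(x_{0:∞}) ≤ ρ_{[q U r]}(x_{1:∞}). -/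
theorem untilRob_mono_before_witness (q : X → EReal) (r : (ℕ → X) → EReal) (x : ℕ → X)
    (hex : ∃ τ : ℕ, untilRob q r x = untilTerm q r x τ)
    (hpos : ∀ t : ℕ, untilRob q r x = untilTerm q r x t → 0 < t) :
    untilRob q r x ≤ untilRob q r (shift x 1) := by
  obtain ⟨τ, hτ⟩ := hex
  obtain ⟨t, rfl⟩ : ∃ t, τ = t + 1 := Nat.exists_eq_add_one.mpr (hpos τ hτ)
  exact hτ ▸ untilTerm_succ_le_untilRob_shift q r x t
end

section
/- The greedy policy is optimal for Globally with a propositional operand: if π(x) ∈ argmax_a min( q(x), V*_{G q}(f(x,a)) ), then along the closed-loop trajectory x̄_{0:∞} generated by π from any x̄₀, (i) the sequence V*_{G q}(x̄_k) is nondecreasing in k, (ii) q(x̄_k) ≥ V*_{G q}(x̄₀) for all k, and therefore (iii) inf_{k ≥ 0} q(x̄_k) = V*_{G q}(x̄₀). -/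
/-!
Only the easy half of the Bellman recursion is needed: every action sequence from `x` has value
at most `min (q x) (V (f x a₀))`, so a greedy `π` gives `V x ≤ min (q x) (V (f x (π x)))`.
Hence `V` does not decrease along the closed loop and stays below `q` there, so every `q (x̄ₖ)`
is at least `V x̄₀`; conversely the closed loop is itself an action sequence, so its value is at
most `V x̄₀`.
-/

variable {X A : Type*}

/-- Optimal value of `G q`: sup over action sequences of `inf_{k ≥ 0} q (x_k)`. -/
noncomputable def VG (f : X → A → X) (q : X → EReal) (x0 : X) : EReal :=
  ⨆ a : ℕ → A, ⨅ k : ℕ, q (traj f x0 a k)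

/-- Closed-loop trajectory generated by a Markovian policy π from x0. -/
def closedLoop (f : X → A → X) (π : X → A) (x0 : X) : ℕ → X
  | 0 => x0
  | k + 1 => f (closedLoop f π x0 k) (π (closedLoop f π x0 k))

section Bellman

variable (f : X → A → X) (q : X → EReal)

def IsGreedy (π : X → A) : Prop :=
  ∀ (x : X) (a : A), min (q x) (VG f q (f x a)) ≤ min (q x) (VG f q (f x (π x)))

theorem traj_succ' (x : X) (a : ℕ → A) (k : ℕ) :
    traj f x a (k + 1) = traj f (f x (a 0)) (fun n => a (n + 1)) k := by
  induction k with
  | zero => rfl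
  | succ k ih => exact congrArg (f · (a (k + 1))) ih

theorem iInf_traj_le_min_VG (x : X) (a : ℕ → A) :
    ⨅ k, q (traj f x a k) ≤ min (q x) (VG f q (f x (a 0))) := by
  refine le_min (iInf_le _ 0) (le_iSup_of_le (fun n => a (n + 1)) (le_iInf fun k => ?_))
  rw [← traj_succ']
  exact iInf_le _ (k + 1)

theorem VG_le_iSup_min (x : X) : VG f q x ≤ ⨆ a : A, min (q x) (VG f q (f x a)) :=
  iSup_le fun a => (iInf_traj_le_min_VG f q x a).trans (le_iSup_of_le (a 0) le_rfl)

theorem VG_le_min_of_greedy {π : X → A} (hπ : IsGreedy f q π) (x : X) :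
    VG f q x ≤ min (q x) (VG f q (f x (π x))) :=
  (VG_le_iSup_min f q x).trans (iSup_le (hπ x))

variable {f q}

theorem monotone_VG_closedLoop {π : X → A} (hπ : IsGreedy f q π) (x0 : X) :
    Monotone fun k => VG f q (closedLoop f π x0 k) :=
  monotone_nat_of_le_succ fun _ => (VG_le_min_of_greedy f q hπ _).trans (min_le_right _ _)

theorem VG_le_closedLoop {π : X → A} (hπ : IsGreedy f q π) (x0 : X) (k : ℕ) :
    VG f q x0 ≤ q (closedLoop f π x0 k) :=
  calc VG f q x0 ≤ VG f q (closedLoop f π x0 k) := monotone_VG_closedLoop hπ x0 (Nat.zero_le k)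
    _ ≤ q (closedLoop f π x0 k) := (VG_le_min_of_greedy f q hπ _).trans (min_le_left _ _)

end Bellman

theorem closedLoop_eq_traj (f : X → A → X) (π : X → A) (x0 : X) :
    closedLoop f π x0 = traj f x0 (fun n => π (closedLoop f π x0 n)) := by
  funext k
  induction k with
  | zero => rfl
  | succ k ih => simp only [closedLoop, traj, ih]

theorem iInf_closedLoop_le_VG (f : X → A → X) (q : X → EReal) (π : X → A) (x0 : X) :
    ⨅ k, q (closedLoop f π x0 k) ≤ VG f q x0 := by
  rw [closedLoop_eq_traj]
  exact le_iSup (fun a => ⨅ k, q (traj f x0 a k)) _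

theorem greedy_globally_optimal_general
    (f : X → A → X) (q : X → EReal)
    (π : X → A)
    (hπ : ∀ (x : X) (a : A),
      min (q x) (VG f q (f x a)) ≤ min (q x) (VG f q (f x (π x))))
    (x0 : X) :
    (∀ k : ℕ, VG f q (closedLoop f π x0 k) ≤ VG f q (closedLoop f π x0 (k + 1))) ∧
    (∀ k : ℕ, VG f q x0 ≤ q (closedLoop f π x0 k)) ∧
    (⨅ k : ℕ, q (closedLoop f π x0 k)) = VG f q x0 :=
  ⟨fun k => monotone_VG_closedLoop hπ x0 k.le_succ, VG_le_closedLoop hπ x0,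
    le_antisymm (iInf_closedLoop_le_VG f q π x0) (le_iInf (VG_le_closedLoop hπ x0))⟩

/-- the greedy policy is optimal for Globally with a propositional operand:
if `π(x)` maximizes `a ↦ min(q x, V*_{G q}(f(x,a)))`, then along the closed-loop trajectory
(i) the value sequence is nondecreasing, (ii) `q(x̄_k) ≥ V*_{G q}(x̄₀)` for all k, and
(iii) `inf_k q(x̄_k) = V*_{G q}(x̄₀)`. -/
theorem greedy_globally_optimal [Nonempty A] [Finite A]
    (f : X → A → X) (q : X → EReal) (hq : (Set.range q).Finite)
    (π : X → A)
    (hπ : ∀ (x : X) (a : A),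
      min (q x) (VG f q (f x a)) ≤ min (q x) (VG f q (f x (π x))))
    (x0 : X) :
    (∀ k : ℕ, VG f q (closedLoop f π x0 k) ≤ VG f q (closedLoop f π x0 (k + 1))) ∧
    (∀ k : ℕ, VG f q x0 ≤ q (closedLoop f π x0 k)) ∧
    (⨅ k : ℕ, q (closedLoop f π x0 k)) = VG f q x0 :=
  greedy_globally_optimal_general f q π hπ x0
end
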